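/- Completeness of the HPL tableau calculus: if φ is valid on all product Kripke frames, then there is a closed tableau with root formula @ᵢ@ₐ¬φ for fresh nominals i, a. -/

import Mathlib

/-- Formulas of two-dimensional hybrid (product) logic. -/
inductive Form (P N1 N2 : Type) : Type
  | prop : P → Form P N1 N2
  | nom1 : N1 → Form P N1 N2
  | nom2 : N2 → Form P N1 N2
  | neg  : Form P N1 N2 → Form P N1 N2
  | and  : Form P N1 N2 → Form P N1 N2 → Form P N1 N2
  | dia1 : Form P N1 N2 → Form P N1 N2
  | dia2 : Form P N1 N2 → Form P N1 N2
  | at1  : N1 → Form P N1 N2 → Form P N1 N2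
  | at2  : N2 → Form P N1 N2 → Form P N1 N2

/-- A product Kripke model: two Kripke frames plus a valuation interpreting
propositional variables as sets of pairs and nominals as named points. -/
structure ProductModel (P N1 N2 W1 W2 : Type) : Type where
  R1 : W1 → W1 → Prop
  R2 : W2 → W2 → Prop
  V  : P → W1 × W2 → Prop
  v1 : N1 → W1
  v2 : N2 → W2

variable {P N1 N2 W1 W2 : Type}

/-- Horizontal accessibility. -/
def ProductModel.Rh (M : ProductModel P N1 N2 W1 W2) (w w' : W1 × W2) : Prop :=
  M.R1 w.1 w'.1 ∧ w.2 = w'.2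

/-- Vertical accessibility. -/
def ProductModel.Rv (M : ProductModel P N1 N2 W1 W2) (w w' : W1 × W2) : Prop :=
  w.1 = w'.1 ∧ M.R2 w.2 w'.2

/-- Satisfaction in a product model. -/
def ProductModel.sat (M : ProductModel P N1 N2 W1 W2) : W1 × W2 → Form P N1 N2 → Prop
  | w, .prop p  => M.V p w
  | w, .nom1 i  => w.1 = M.v1 i
  | w, .nom2 a  => w.2 = M.v2 a
  | w, .neg φ   => ¬ M.sat w φ
  | w, .and φ ψ => M.sat w φ ∧ M.sat w ψ
  | w, .dia1 φ  => ∃ w', M.Rh w w' ∧ M.sat w' φ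
  | w, .dia2 φ  => ∃ w', M.Rv w w' ∧ M.sat w' φ
  | w, .at1 i φ => M.sat (M.v1 i, w.2) φ
  | w, .at2 a φ => M.sat (w.1, M.v2 a) φ

/-- Occurrence of a first-sort nominal in a formula. -/
def occ1 {P N1 N2 : Type} (j : N1) : Form P N1 N2 → Prop
  | .prop _   => False
  | .nom1 i   => i = j
  | .nom2 _   => False
  | .neg φ    => occ1 j φ
  | .and φ ψ  => occ1 j φ ∨ occ1 j ψ
  | .dia1 φ   => occ1 j φ
  | .dia2 φ   => occ1 j φ
  | .at1 i φ  => i = j ∨ occ1 j φ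
  | .at2 _ φ  => occ1 j φ

/-- Occurrence of a second-sort nominal in a formula. -/
def occ2 {P N1 N2 : Type} (b : N2) : Form P N1 N2 → Prop
  | .prop _   => False
  | .nom1 _   => False
  | .nom2 a   => a = b
  | .neg φ    => occ2 b φ
  | .and φ ψ  => occ2 b φ ∨ occ2 b ψ
  | .dia1 φ   => occ2 b φ
  | .dia2 φ   => occ2 b φ
  | .at1 _ φ  => occ2 b φ
  | .at2 a φ  => a = b ∨ occ2 b φ

/-- Hybrid formulas over propositional variables and two sorts of nominals,
all indexed by natural numbers. -/
abbrev F := Form ℕ ℕ ℕ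

/-- A first-sort nominal is fresh for a branch if it occurs in none of its
formulas. -/
def fresh1 (j : ℕ) (L : List F) : Prop := ∀ ψ ∈ L, ¬ occ1 j ψ

/-- A second-sort nominal is fresh for a branch if it occurs in none of its
formulas. -/
def fresh2 (b : ℕ) (L : List F) : Prop := ∀ ψ ∈ L, ¬ occ2 b ψ


/-- A branch (list of formulas, most recent first) is closed if it contains a
contradiction at some prefix. -/
def ClosedL (L : List F) : Prop :=
  (∃ i a φ, Form.at1 i (Form.at2 a φ) ∈ L ∧ Form.at1 i (Form.at2 a (Form.neg φ)) ∈ L) ∨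
  (∃ i φ, Form.at1 i φ ∈ L ∧ Form.at1 i (Form.neg φ) ∈ L) ∨
  (∃ a φ, Form.at2 a φ ∈ L ∧ Form.at2 a (Form.neg φ) ∈ L)

/-- One application of a non-branching HPL tableau rule extending a branch `L`. -/
inductive StepNB : List F → List F → Prop
  | negneg : Form.at1 i (Form.at2 a (Form.neg (Form.neg φ))) ∈ L →
      StepNB L (Form.at1 i (Form.at2 a φ) :: L)
  | and : Form.at1 i (Form.at2 a (Form.and φ ψ)) ∈ L →
      StepNB L (Form.at1 i (Form.at2 a ψ) :: Form.at1 i (Form.at2 a φ) :: L)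
  | dia1 : Form.at1 i (Form.at2 a (Form.dia1 φ)) ∈ L → fresh1 j L →
      StepNB L (Form.at1 j (Form.at2 a φ) :: Form.at1 i (Form.dia1 (Form.nom1 j)) :: L)
  | dia2 : Form.at1 i (Form.at2 a (Form.dia2 φ)) ∈ L → fresh2 b L →
      StepNB L (Form.at1 i (Form.at2 b φ) :: Form.at2 a (Form.dia2 (Form.nom2 b)) :: L)
  | negDia1 : Form.at1 i (Form.at2 a (Form.neg (Form.dia1 φ))) ∈ L →
      Form.at1 i (Form.dia1 (Form.nom1 j)) ∈ L →
      StepNB L (Form.at1 j (Form.at2 a (Form.neg φ)) :: L)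
  | negDia2 : Form.at1 i (Form.at2 a (Form.neg (Form.dia2 φ))) ∈ L →
      Form.at2 a (Form.dia2 (Form.nom2 b)) ∈ L →
      StepNB L (Form.at1 i (Form.at2 b (Form.neg φ)) :: L)
  | at1 : Form.at1 i (Form.at2 a (Form.at1 j φ)) ∈ L →
      StepNB L (Form.at1 j (Form.at2 a φ) :: L)
  | at2 : Form.at1 i (Form.at2 a (Form.at2 b φ)) ∈ L →
      StepNB L (Form.at1 i (Form.at2 b φ) :: L)
  | negAt1 : Form.at1 i (Form.at2 a (Form.neg (Form.at1 j φ))) ∈ L →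
      StepNB L (Form.at1 j (Form.at2 a (Form.neg φ)) :: L)
  | negAt2 : Form.at1 i (Form.at2 a (Form.neg (Form.at2 b φ))) ∈ L →
      StepNB L (Form.at1 i (Form.at2 b (Form.neg φ)) :: L)
  | red1a : Form.at1 i (Form.at2 a (Form.nom1 k)) ∈ L →
      StepNB L (Form.at1 i (Form.nom1 k) :: L)
  | red1b : Form.at1 i (Form.at2 a (Form.neg (Form.nom1 k))) ∈ L →
      StepNB L (Form.at1 i (Form.neg (Form.nom1 k)) :: L)
  | red2a : Form.at1 i (Form.at2 a (Form.nom2 c)) ∈ L →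
      StepNB L (Form.at2 a (Form.nom2 c) :: L)
  | red2b : Form.at1 i (Form.at2 a (Form.neg (Form.nom2 c))) ∈ L →
      StepNB L (Form.at2 a (Form.neg (Form.nom2 c)) :: L)
  | neg1 : Form.at1 i (Form.neg (Form.nom1 j)) ∈ L →
      StepNB L (Form.at1 j (Form.nom1 j) :: L)
  | neg2 : Form.at2 a (Form.neg (Form.nom2 b)) ∈ L →
      StepNB L (Form.at2 b (Form.nom2 b) :: L)
  | id1 : Form.at1 i (Form.at2 a φ) ∈ L → Form.at1 i (Form.nom1 j) ∈ L →
      StepNB L (Form.at1 j (Form.at2 a φ) :: L)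
  | id2 : Form.at1 i (Form.at2 a φ) ∈ L → Form.at2 a (Form.nom2 b) ∈ L →
      StepNB L (Form.at1 i (Form.at2 b φ) :: L)
  | id'1a : Form.at1 i (Form.nom1 k) ∈ L → Form.at1 i (Form.nom1 j) ∈ L →
      StepNB L (Form.at1 j (Form.nom1 k) :: L)
  | id'1b : Form.at1 i (Form.neg (Form.nom1 k)) ∈ L → Form.at1 i (Form.nom1 j) ∈ L →
      StepNB L (Form.at1 j (Form.neg (Form.nom1 k)) :: L)
  | id'2a : Form.at2 a (Form.nom2 c) ∈ L → Form.at2 a (Form.nom2 b) ∈ L →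
      StepNB L (Form.at2 b (Form.nom2 c) :: L)
  | id'2b : Form.at2 a (Form.neg (Form.nom2 c)) ∈ L → Form.at2 a (Form.nom2 b) ∈ L →
      StepNB L (Form.at2 b (Form.neg (Form.nom2 c)) :: L)


/-- `ClosedTab L`: the branch `L` can be extended, by the HPL tableau rules,
to a finite tableau (tree) all of whose branches are closed.  The branching
rule `[¬∧]` requires both of the resulting branches to be closed. -/
inductive ClosedTab : List F → Prop
  | closed : ClosedL L → ClosedTab L
  | step : StepNB L L' → ClosedTab L' → ClosedTab L
  | split : Form.at1 i (Form.at2 a (Form.neg (Form.and φ ψ))) ∈ L →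
      ClosedTab (Form.at1 i (Form.at2 a (Form.neg φ)) :: L) →
      ClosedTab (Form.at1 i (Form.at2 a (Form.neg ψ)) :: L) →
      ClosedTab L

/-!
If `[@ᵢ@ₐ¬φ]` had no closed tableau, applying the rules fairly (visiting every pair of branch
positions at arbitrarily late stages, following an open branch at `[¬∧]`, and taking nominals
above all those in sight at the `◇` rules) would give a chain of open branches whose union `Θ`
is a Hintikka set. The urfather model of `Θ` has nominals as worlds and sends each nominal to the
least member of its `Θ`-equality class; its truth lemma makes `@ᵢ@ₐ¬φ ∈ Θ` refute `φ` at the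
image of `(i, a)`, against the validity of `φ`.
-/

def nomBound : F → ℕ
  | .prop _ => 0
  | .nom1 i => i + 1
  | .nom2 a => a + 1
  | .neg ψ => nomBound ψ
  | .and ψ χ => max (nomBound ψ) (nomBound χ)
  | .dia1 ψ => nomBound ψ
  | .dia2 ψ => nomBound ψ
  | .at1 i ψ => max (i + 1) (nomBound ψ)
  | .at2 a ψ => max (a + 1) (nomBound ψ)

theorem lt_nomBound_of_occ1 {j : ℕ} {ψ : F} (h : occ1 j ψ) : j < nomBound ψ := by
  induction ψ <;> grind [occ1, nomBound]

theorem lt_nomBound_of_occ2 {b : ℕ} {ψ : F} (h : occ2 b ψ) : b < nomBound ψ := by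
  induction ψ <;> grind [occ2, nomBound]

def nomBoundList (L : List F) : ℕ := (L.map nomBound).sum

theorem nomBound_le_nomBoundList {ψ : F} {L : List F} (h : ψ ∈ L) :
    nomBound ψ ≤ nomBoundList L :=
  List.le_sum_of_mem (List.mem_map_of_mem h)

theorem fresh1_nomBoundList (L : List F) : fresh1 (nomBoundList L) L := fun _ hψ hocc =>
  (lt_nomBound_of_occ1 hocc).not_ge (nomBound_le_nomBoundList hψ)

theorem fresh2_nomBoundList (L : List F) : fresh2 (nomBoundList L) L := fun _ hψ hocc =>
  (lt_nomBound_of_occ2 hocc).not_ge (nomBound_le_nomBoundList hψ)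

section Expansion

open Classical in
noncomputable def expandUnary (ψ : F) (L : List F) : List F :=
  match ψ with
  | .at1 i (.at2 a (.neg (.neg φ))) => [.at1 i (.at2 a φ)]
  | .at1 i (.at2 a (.and φ χ)) => [.at1 i (.at2 a χ), .at1 i (.at2 a φ)]
  -- if the left branch of `[¬∧]` closes and `L` is open, the right branch is open
  | .at1 i (.at2 a (.neg (.and φ χ))) =>
      if ClosedTab (.at1 i (.at2 a (.neg φ)) :: L) then [.at1 i (.at2 a (.neg χ))]
      else [.at1 i (.at2 a (.neg φ))]
  | .at1 i (.at2 a (.dia1 φ)) =>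
      [.at1 (nomBoundList L) (.at2 a φ), .at1 i (.dia1 (.nom1 (nomBoundList L)))]
  | .at1 i (.at2 a (.dia2 φ)) =>
      [.at1 i (.at2 (nomBoundList L) φ), .at2 a (.dia2 (.nom2 (nomBoundList L)))]
  | .at1 _ (.at2 a (.at1 j φ)) => [.at1 j (.at2 a φ)]
  | .at1 i (.at2 _ (.at2 b φ)) => [.at1 i (.at2 b φ)]
  | .at1 _ (.at2 a (.neg (.at1 j φ))) => [.at1 j (.at2 a (.neg φ))]
  | .at1 i (.at2 _ (.neg (.at2 b φ))) => [.at1 i (.at2 b (.neg φ))]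
  | .at1 i (.at2 _ (.nom1 k)) => [.at1 i (.nom1 k)]
  | .at1 i (.at2 _ (.neg (.nom1 k))) => [.at1 i (.neg (.nom1 k))]
  | .at1 _ (.at2 a (.nom2 c)) => [.at2 a (.nom2 c)]
  | .at1 _ (.at2 a (.neg (.nom2 c))) => [.at2 a (.neg (.nom2 c))]
  | .at1 _ (.neg (.nom1 j)) => [.at1 j (.nom1 j)]
  | .at2 _ (.neg (.nom2 b)) => [.at2 b (.nom2 b)]
  | _ => []

def expandBinary (ψ₁ ψ₂ : F) : List F :=
  match ψ₁, ψ₂ with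
  | .at1 i (.at2 a φ), .at1 i' (.nom1 j) => if i' = i then [.at1 j (.at2 a φ)] else []
  | .at1 i (.at2 a φ), .at2 a' (.nom2 b) => if a' = a then [.at1 i (.at2 b φ)] else []
  | .at1 i (.at2 a (.neg (.dia1 φ))), .at1 i' (.dia1 (.nom1 j)) =>
      if i' = i then [.at1 j (.at2 a (.neg φ))] else []
  | .at1 i (.at2 a (.neg (.dia2 φ))), .at2 a' (.dia2 (.nom2 b)) =>
      if a' = a then [.at1 i (.at2 b (.neg φ))] else []
  | .at1 i (.nom1 k), .at1 i' (.nom1 j) => if i' = i then [.at1 j (.nom1 k)] else []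
  | .at1 i (.neg (.nom1 k)), .at1 i' (.nom1 j) =>
      if i' = i then [.at1 j (.neg (.nom1 k))] else []
  | .at2 a (.nom2 c), .at2 a' (.nom2 b) => if a' = a then [.at2 b (.nom2 c)] else []
  | .at2 a (.neg (.nom2 c)), .at2 a' (.nom2 b) =>
      if a' = a then [.at2 b (.neg (.nom2 c))] else []
  | _, _ => []

variable {L : List F}

theorem closedTab_of_expandUnary {ψ : F} (hψ : ψ ∈ L)
    (h : ClosedTab (expandUnary ψ L ++ L)) : ClosedTab L := by
  unfold expandUnary at h
  split at h <;>
    first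
      | exact h
      | exact .step (.negneg hψ) h
      | exact .step (.and hψ) h
      | exact .step (.dia1 hψ (fresh1_nomBoundList L)) h
      | exact .step (.dia2 hψ (fresh2_nomBoundList L)) h
      | exact .step (.at1 hψ) h
      | exact .step (.at2 hψ) h
      | exact .step (.negAt1 hψ) h
      | exact .step (.negAt2 hψ) h
      | exact .step (.red1a hψ) h
      | exact .step (.red1b hψ) h
      | exact .step (.red2a hψ) h
      | exact .step (.red2b hψ) h
      | exact .step (.neg1 hψ) h
      | exact .step (.neg2 hψ) h
      | (split at h
         · exact .split hψ ‹_› h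
         · exact absurd h ‹_›)

theorem closedTab_of_expandBinary {ψ₁ ψ₂ : F} (h₁ : ψ₁ ∈ L) (h₂ : ψ₂ ∈ L)
    (h : ClosedTab (expandBinary ψ₁ ψ₂ ++ L)) : ClosedTab L := by
  unfold expandBinary at h
  split at h <;>
    first
      | exact h
      | (split at h
         · subst_vars
           first
             | exact .step (.id1 h₁ h₂) h
             | exact .step (.id2 h₁ h₂) h
             | exact .step (.negDia1 h₁ h₂) h
             | exact .step (.negDia2 h₁ h₂) h
             | exact .step (.id'1a h₁ h₂) h
             | exact .step (.id'1b h₁ h₂) h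
             | exact .step (.id'2a h₁ h₂) h
             | exact .step (.id'2b h₁ h₂) h
         · exact h)

end Expansion

section Saturation

noncomputable def expandAt (k₁ k₂ : ℕ) (L : List F) : List F :=
  match L.reverse[k₁]?, L.reverse[k₂]? with
  | some ψ₁, some ψ₂ =>
    let L' := expandBinary ψ₁ ψ₂ ++ L
    expandUnary ψ₁ L' ++ L'
  | _, _ => L

theorem suffix_expandAt (k₁ k₂ : ℕ) (L : List F) : L <:+ expandAt k₁ k₂ L := by
  unfold expandAt
  split
  · exact (List.suffix_append _ _).trans (List.suffix_append _ _)
  · exact List.suffix_refl L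

theorem closedTab_of_expandAt {k₁ k₂ : ℕ} {L : List F}
    (h : ClosedTab (expandAt k₁ k₂ L)) : ClosedTab L := by
  unfold expandAt at h
  split at h
  · rename_i ψ₁ ψ₂ h₁ h₂
    have hψ₁ : ψ₁ ∈ L := List.mem_reverse.mp (List.mem_of_getElem? h₁)
    have hψ₂ : ψ₂ ∈ L := List.mem_reverse.mp (List.mem_of_getElem? h₂)
    exact closedTab_of_expandBinary hψ₁ hψ₂ <|
      closedTab_of_expandUnary (List.mem_append_right _ hψ₁) h
  · exact h

variable (L₀ : List F)

/-- Positions are counted from the root, so they do not move as the branch grows. Stage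
`Nat.pair m (Nat.pair k₁ k₂) + 1` expands the formulas at positions `k₁`, `k₂`: every pair of
positions is visited at arbitrarily late stages, which makes the limit saturated. -/
noncomputable def saturationSeq : ℕ → List F
  | 0 => L₀
  | n + 1 => expandAt n.unpair.2.unpair.1 n.unpair.2.unpair.2 (saturationSeq n)

def saturation : Set F := {ψ | ∃ n, ψ ∈ saturationSeq L₀ n}

variable {L₀}

theorem subset_saturation {ψ : F} (h : ψ ∈ L₀) : ψ ∈ saturation L₀ := ⟨0, h⟩

theorem saturationSeq_suffix {m n : ℕ} (h : m ≤ n) :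
    saturationSeq L₀ m <:+ saturationSeq L₀ n := by
  induction n, h using Nat.le_induction with
  | base => exact List.suffix_refl _
  | succ n _ ih => exact ih.trans (suffix_expandAt _ _ _)

theorem not_closedTab_saturationSeq (h : ¬ ClosedTab L₀) :
    ∀ n, ¬ ClosedTab (saturationSeq L₀ n)
  | 0 => h
  | n + 1 => fun hn => not_closedTab_saturationSeq h n (closedTab_of_expandAt hn)

theorem exists_mem_saturationSeq {ψ₁ ψ₂ : F} (h₁ : ψ₁ ∈ saturation L₀)
    (h₂ : ψ₂ ∈ saturation L₀) :
    ∃ n, ψ₁ ∈ saturationSeq L₀ n ∧ ψ₂ ∈ saturationSeq L₀ n := by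
  obtain ⟨m₁, hm₁⟩ := h₁
  obtain ⟨m₂, hm₂⟩ := h₂
  exact ⟨max m₁ m₂, (saturationSeq_suffix (le_max_left _ _)).subset hm₁,
    (saturationSeq_suffix (le_max_right _ _)).subset hm₂⟩

theorem false_of_mem_saturation_of_closedL (hL₀ : ¬ ClosedTab L₀) {ψ₁ ψ₂ : F}
    (h₁ : ψ₁ ∈ saturation L₀) (h₂ : ψ₂ ∈ saturation L₀)
    (hcl : ∀ L : List F, ψ₁ ∈ L → ψ₂ ∈ L → ClosedL L) : False :=
  have ⟨n, hn₁, hn₂⟩ := exists_mem_saturationSeq h₁ h₂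
  not_closedTab_saturationSeq hL₀ n (.closed (hcl _ hn₁ hn₂))

theorem exists_saturationSeq_succ_eq {ψ₁ ψ₂ : F} (h₁ : ψ₁ ∈ saturation L₀)
    (h₂ : ψ₂ ∈ saturation L₀) : ∃ n, saturationSeq L₀ (n + 1) =
      expandUnary ψ₁ (expandBinary ψ₁ ψ₂ ++ saturationSeq L₀ n) ++
        (expandBinary ψ₁ ψ₂ ++ saturationSeq L₀ n) := by
  obtain ⟨m, hm₁, hm₂⟩ := exists_mem_saturationSeq h₁ h₂
  obtain ⟨k₁, hk₁⟩ := List.getElem?_of_mem (List.mem_reverse.mpr hm₁)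
  obtain ⟨k₂, hk₂⟩ := List.getElem?_of_mem (List.mem_reverse.mpr hm₂)
  set n := m.pair (k₁.pair k₂)
  have hpre : (saturationSeq L₀ m).reverse <+: (saturationSeq L₀ n).reverse :=
    List.reverse_prefix.mpr (saturationSeq_suffix (Nat.left_le_pair _ _))
  have persist : ∀ {k ψ}, (saturationSeq L₀ m).reverse[k]? = some ψ →
      (saturationSeq L₀ n).reverse[k]? = some ψ := fun hk => by
    obtain ⟨hlt, rfl⟩ := List.getElem?_eq_some_iff.mp hk
    exact List.prefix_iff_getElem?.mp hpre _ hlt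
  refine ⟨n, ?_⟩
  simp only [n, saturationSeq, Nat.unpair_pair, expandAt, persist hk₁, persist hk₂]

theorem exists_expandUnary_subset_saturation {ψ : F} (h : ψ ∈ saturation L₀) :
    ∃ L, ∀ χ ∈ expandUnary ψ L, χ ∈ saturation L₀ := by
  obtain ⟨n, hn⟩ := exists_saturationSeq_succ_eq h h
  exact ⟨_, fun χ hχ => ⟨n + 1, hn ▸ List.mem_append_left _ hχ⟩⟩

theorem expandBinary_subset_saturation {ψ₁ ψ₂ : F} (h₁ : ψ₁ ∈ saturation L₀)
    (h₂ : ψ₂ ∈ saturation L₀) : ∀ χ ∈ expandBinary ψ₁ ψ₂, χ ∈ saturation L₀ :=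
  fun _ hχ =>
    have ⟨n, hn⟩ := exists_saturationSeq_succ_eq h₁ h₂
    ⟨n + 1, hn ▸ List.mem_append_right _ (List.mem_append_left _ hχ)⟩

end Saturation

/-- One field per tableau rule, named after the constructors of `StepNB` and `ClosedTab.split`;
the `open` fields are the three ways `ClosedL` closes a branch. -/
structure IsHintikka (Θ : Set F) : Prop where
  negneg {i a φ} : Form.at1 i (Form.at2 a (Form.neg (Form.neg φ))) ∈ Θ →
    Form.at1 i (Form.at2 a φ) ∈ Θ
  and {i a φ ψ} : Form.at1 i (Form.at2 a (Form.and φ ψ)) ∈ Θ →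
    Form.at1 i (Form.at2 a φ) ∈ Θ ∧ Form.at1 i (Form.at2 a ψ) ∈ Θ
  negAnd {i a φ ψ} : Form.at1 i (Form.at2 a (Form.neg (Form.and φ ψ))) ∈ Θ →
    Form.at1 i (Form.at2 a (Form.neg φ)) ∈ Θ ∨ Form.at1 i (Form.at2 a (Form.neg ψ)) ∈ Θ
  dia1 {i a φ} : Form.at1 i (Form.at2 a (Form.dia1 φ)) ∈ Θ →
    ∃ j, Form.at1 i (Form.dia1 (Form.nom1 j)) ∈ Θ ∧ Form.at1 j (Form.at2 a φ) ∈ Θ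
  dia2 {i a φ} : Form.at1 i (Form.at2 a (Form.dia2 φ)) ∈ Θ →
    ∃ b, Form.at2 a (Form.dia2 (Form.nom2 b)) ∈ Θ ∧ Form.at1 i (Form.at2 b φ) ∈ Θ
  negDia1 {i a φ j} : Form.at1 i (Form.at2 a (Form.neg (Form.dia1 φ))) ∈ Θ →
    Form.at1 i (Form.dia1 (Form.nom1 j)) ∈ Θ → Form.at1 j (Form.at2 a (Form.neg φ)) ∈ Θ
  negDia2 {i a φ b} : Form.at1 i (Form.at2 a (Form.neg (Form.dia2 φ))) ∈ Θ →
    Form.at2 a (Form.dia2 (Form.nom2 b)) ∈ Θ → Form.at1 i (Form.at2 b (Form.neg φ)) ∈ Θ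
  at1 {i a j φ} : Form.at1 i (Form.at2 a (Form.at1 j φ)) ∈ Θ →
    Form.at1 j (Form.at2 a φ) ∈ Θ
  at2 {i a b φ} : Form.at1 i (Form.at2 a (Form.at2 b φ)) ∈ Θ →
    Form.at1 i (Form.at2 b φ) ∈ Θ
  negAt1 {i a j φ} : Form.at1 i (Form.at2 a (Form.neg (Form.at1 j φ))) ∈ Θ →
    Form.at1 j (Form.at2 a (Form.neg φ)) ∈ Θ
  negAt2 {i a b φ} : Form.at1 i (Form.at2 a (Form.neg (Form.at2 b φ))) ∈ Θ →
    Form.at1 i (Form.at2 b (Form.neg φ)) ∈ Θ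
  red1a {i a k} : Form.at1 i (Form.at2 a (Form.nom1 k)) ∈ Θ → Form.at1 i (Form.nom1 k) ∈ Θ
  red1b {i a k} : Form.at1 i (Form.at2 a (Form.neg (Form.nom1 k))) ∈ Θ →
    Form.at1 i (Form.neg (Form.nom1 k)) ∈ Θ
  red2a {i a c} : Form.at1 i (Form.at2 a (Form.nom2 c)) ∈ Θ → Form.at2 a (Form.nom2 c) ∈ Θ
  red2b {i a c} : Form.at1 i (Form.at2 a (Form.neg (Form.nom2 c))) ∈ Θ →
    Form.at2 a (Form.neg (Form.nom2 c)) ∈ Θ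
  neg1 {i j} : Form.at1 i (Form.neg (Form.nom1 j)) ∈ Θ → Form.at1 j (Form.nom1 j) ∈ Θ
  neg2 {a b} : Form.at2 a (Form.neg (Form.nom2 b)) ∈ Θ → Form.at2 b (Form.nom2 b) ∈ Θ
  id1 {i a φ j} : Form.at1 i (Form.at2 a φ) ∈ Θ → Form.at1 i (Form.nom1 j) ∈ Θ →
    Form.at1 j (Form.at2 a φ) ∈ Θ
  id2 {i a φ b} : Form.at1 i (Form.at2 a φ) ∈ Θ → Form.at2 a (Form.nom2 b) ∈ Θ →
    Form.at1 i (Form.at2 b φ) ∈ Θ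
  id'1a {i k j} : Form.at1 i (Form.nom1 k) ∈ Θ → Form.at1 i (Form.nom1 j) ∈ Θ →
    Form.at1 j (Form.nom1 k) ∈ Θ
  id'1b {i k j} : Form.at1 i (Form.neg (Form.nom1 k)) ∈ Θ → Form.at1 i (Form.nom1 j) ∈ Θ →
    Form.at1 j (Form.neg (Form.nom1 k)) ∈ Θ
  id'2a {a c b} : Form.at2 a (Form.nom2 c) ∈ Θ → Form.at2 a (Form.nom2 b) ∈ Θ →
    Form.at2 b (Form.nom2 c) ∈ Θ
  id'2b {a c b} : Form.at2 a (Form.neg (Form.nom2 c)) ∈ Θ → Form.at2 a (Form.nom2 b) ∈ Θ →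
    Form.at2 b (Form.neg (Form.nom2 c)) ∈ Θ
  open12 {i a φ} : Form.at1 i (Form.at2 a φ) ∈ Θ →
    Form.at1 i (Form.at2 a (Form.neg φ)) ∈ Θ → False
  open1 {i φ} : Form.at1 i φ ∈ Θ → Form.at1 i (Form.neg φ) ∈ Θ → False
  open2 {a φ} : Form.at2 a φ ∈ Θ → Form.at2 a (Form.neg φ) ∈ Θ → False

theorem isHintikka_saturation {L₀ : List F} (hL₀ : ¬ ClosedTab L₀) :
    IsHintikka (saturation L₀) where
  negneg h := (exists_expandUnary_subset_saturation h).choose_spec _ (.head _)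
  and h :=
    have ⟨_, hL⟩ := exists_expandUnary_subset_saturation h
    ⟨hL _ (.tail _ (.head _)), hL _ (.head _)⟩
  negAnd {i a φ ψ} h := by
    obtain ⟨L, hL⟩ := exists_expandUnary_subset_saturation h
    by_cases hφ : ClosedTab (.at1 i (.at2 a (.neg φ)) :: L)
    · exact .inr (hL _ (by simp [expandUnary, hφ]))
    · exact .inl (hL _ (by simp [expandUnary, hφ]))
  dia1 h :=
    have ⟨_, hL⟩ := exists_expandUnary_subset_saturation h
    ⟨_, hL _ (.tail _ (.head _)), hL _ (.head _)⟩
  dia2 h :=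
    have ⟨_, hL⟩ := exists_expandUnary_subset_saturation h
    ⟨_, hL _ (.tail _ (.head _)), hL _ (.head _)⟩
  negDia1 h₁ h₂ := expandBinary_subset_saturation h₁ h₂ _ (by simp [expandBinary])
  negDia2 h₁ h₂ := expandBinary_subset_saturation h₁ h₂ _ (by simp [expandBinary])
  at1 h := (exists_expandUnary_subset_saturation h).choose_spec _ (.head _)
  at2 h := (exists_expandUnary_subset_saturation h).choose_spec _ (.head _)
  negAt1 h := (exists_expandUnary_subset_saturation h).choose_spec _ (.head _)
  negAt2 h := (exists_expandUnary_subset_saturation h).choose_spec _ (.head _)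
  red1a h := (exists_expandUnary_subset_saturation h).choose_spec _ (.head _)
  red1b h := (exists_expandUnary_subset_saturation h).choose_spec _ (.head _)
  red2a h := (exists_expandUnary_subset_saturation h).choose_spec _ (.head _)
  red2b h := (exists_expandUnary_subset_saturation h).choose_spec _ (.head _)
  neg1 h := (exists_expandUnary_subset_saturation h).choose_spec _ (.head _)
  neg2 h := (exists_expandUnary_subset_saturation h).choose_spec _ (.head _)
  id1 h₁ h₂ := expandBinary_subset_saturation h₁ h₂ _ (by simp [expandBinary])
  id2 h₁ h₂ := expandBinary_subset_saturation h₁ h₂ _ (by simp [expandBinary])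
  id'1a h₁ h₂ := expandBinary_subset_saturation h₁ h₂ _ (by simp [expandBinary])
  id'1b h₁ h₂ := expandBinary_subset_saturation h₁ h₂ _ (by simp [expandBinary])
  id'2a h₁ h₂ := expandBinary_subset_saturation h₁ h₂ _ (by simp [expandBinary])
  id'2b h₁ h₂ := expandBinary_subset_saturation h₁ h₂ _ (by simp [expandBinary])
  open12 h₁ h₂ := false_of_mem_saturation_of_closedL hL₀ h₁ h₂ fun _ h₁ h₂ =>
    .inl ⟨_, _, _, h₁, h₂⟩
  open1 h₁ h₂ := false_of_mem_saturation_of_closedL hL₀ h₁ h₂ fun _ h₁ h₂ =>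
    .inr (.inl ⟨_, _, h₁, h₂⟩)
  open2 h₁ h₂ := false_of_mem_saturation_of_closedL hL₀ h₁ h₂ fun _ h₁ h₂ =>
    .inr (.inr ⟨_, _, h₁, h₂⟩)

section Urfather

variable {r : ℕ → ℕ → Prop}

open Classical in
/-- For a Euclidean relation `r` (`r i j → r i k → r j k`), which is an equivalence on its
range, this is the least member of the class that `i` points to, or `i` if it points nowhere. -/
noncomputable def urfather (r : ℕ → ℕ → Prop) (i : ℕ) : ℕ :=
  if h : ∃ k c, r i c ∧ r c k then Nat.find h else i

theorem urfather_mem {s : Set ℕ} (hs : ∀ {i j}, r i j → i ∈ s → j ∈ s) {i : ℕ}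
    (hi : i ∈ s) : urfather r i ∈ s := by
  classical
  unfold urfather
  split_ifs with h
  · obtain ⟨c, hic, hck⟩ := Nat.find_spec h
    exact hs hck (hs hic hi)
  · exact hi

variable (hr : ∀ ⦃i j k⦄, r i j → r i k → r j k)
include hr

theorem urfather_eq_of_rel {i j : ℕ} (h : r i j) : urfather r i = urfather r j := by
  classical
  have hS : ∀ {k}, (∃ c, r i c ∧ r c k) ↔ (∃ c, r j c ∧ r c k) := fun {k} =>
    ⟨fun ⟨c, hic, hck⟩ => ⟨c, hr h hic, hck⟩,
      fun ⟨c, hjc, hck⟩ => ⟨j, h, hr (hr hjc (hr h h)) hck⟩⟩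
  have hi : ∃ k c, r i c ∧ r c k := ⟨j, j, h, hr h h⟩
  have hj : ∃ k c, r j c ∧ r c k := ⟨_, hS.mp (Nat.find_spec hi)⟩
  unfold urfather
  rw [dif_pos hi, dif_pos hj]
  exact Nat.find_congr' hS

theorem rel_urfather_of_rel_self {j : ℕ} (h : r j j) : r (urfather r j) j := by
  classical
  have hj : ∃ k c, r j c ∧ r c k := ⟨j, j, h, h⟩
  obtain ⟨c, hjc, hcu⟩ : ∃ c, r j c ∧ r c (urfather r j) := by
    unfold urfather
    rw [dif_pos hj]
    exact Nat.find_spec hj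
  exact hr hcu (hr hjc h)

end Urfather

section Model

variable (Θ : Set F)

noncomputable abbrev urfather1 : ℕ → ℕ := urfather fun i j => Form.at1 i (Form.nom1 j) ∈ Θ

noncomputable abbrev urfather2 : ℕ → ℕ := urfather fun a b => Form.at2 a (Form.nom2 b) ∈ Θ

noncomputable def urfatherModel : ProductModel ℕ ℕ ℕ ℕ ℕ where
  R1 i i' := ∃ j, urfather1 Θ j = i' ∧ Form.at1 i (Form.dia1 (Form.nom1 j)) ∈ Θ
  R2 a a' := ∃ b, urfather2 Θ b = a' ∧ Form.at2 a (Form.dia2 (Form.nom2 b)) ∈ Θ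
  V p w := Form.at1 w.1 (Form.at2 w.2 (Form.prop p)) ∈ Θ
  v1 := urfather1 Θ
  v2 := urfather2 Θ

def TruthLemma (φ : F) : Prop :=
  ∀ i a, (Form.at1 i (Form.at2 a φ) ∈ Θ →
      (urfatherModel Θ).sat (urfather1 Θ i, urfather2 Θ a) φ) ∧
    (Form.at1 i (Form.at2 a (Form.neg φ)) ∈ Θ →
      ¬ (urfatherModel Θ).sat (urfather1 Θ i, urfather2 Θ a) φ)

variable {Θ} (hΘ : IsHintikka Θ)
include hΘ

namespace IsHintikka

theorem nom1_euclidean : ∀ ⦃i j k : ℕ⦄, Form.at1 i (Form.nom1 j) ∈ Θ →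
    Form.at1 i (Form.nom1 k) ∈ Θ → Form.at1 j (Form.nom1 k) ∈ Θ :=
  fun _ _ _ hij hik => hΘ.id'1a hik hij

theorem nom2_euclidean : ∀ ⦃a b c : ℕ⦄, Form.at2 a (Form.nom2 b) ∈ Θ →
    Form.at2 a (Form.nom2 c) ∈ Θ → Form.at2 b (Form.nom2 c) ∈ Θ :=
  fun _ _ _ hab hac => hΘ.id'2a hac hab

theorem urfather1_eq {i j : ℕ} (h : Form.at1 i (Form.nom1 j) ∈ Θ) :
    urfather1 Θ i = urfather1 Θ j :=
  urfather_eq_of_rel hΘ.nom1_euclidean h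

theorem urfather2_eq {a b : ℕ} (h : Form.at2 a (Form.nom2 b) ∈ Θ) :
    urfather2 Θ a = urfather2 Θ b :=
  urfather_eq_of_rel hΘ.nom2_euclidean h

theorem urfather1_ne {i j : ℕ} (h : Form.at1 i (Form.neg (Form.nom1 j)) ∈ Θ) :
    urfather1 Θ i ≠ urfather1 Θ j := fun heq => by
  have hu : Form.at1 (urfather1 Θ j) (Form.neg (Form.nom1 j)) ∈ Θ := heq ▸
    urfather_mem (s := {i | Form.at1 i (Form.neg (Form.nom1 j)) ∈ Θ})
      (fun h₁ h₂ => hΘ.id'1b h₂ h₁) h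
  exact hΘ.open1 (rel_urfather_of_rel_self hΘ.nom1_euclidean (hΘ.neg1 h)) hu

theorem urfather2_ne {a b : ℕ} (h : Form.at2 a (Form.neg (Form.nom2 b)) ∈ Θ) :
    urfather2 Θ a ≠ urfather2 Θ b := fun heq => by
  have hu : Form.at2 (urfather2 Θ b) (Form.neg (Form.nom2 b)) ∈ Θ := heq ▸
    urfather_mem (s := {a | Form.at2 a (Form.neg (Form.nom2 b)) ∈ Θ})
      (fun h₁ h₂ => hΘ.id'2b h₂ h₁) h
  exact hΘ.open2 (rel_urfather_of_rel_self hΘ.nom2_euclidean (hΘ.neg2 h)) hu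

theorem at1_urfather1_mem {i a : ℕ} {ψ : F} (h : Form.at1 i (Form.at2 a ψ) ∈ Θ) :
    Form.at1 (urfather1 Θ i) (Form.at2 a ψ) ∈ Θ :=
  urfather_mem (s := {i | Form.at1 i (Form.at2 a ψ) ∈ Θ}) (fun h₁ h₂ => hΘ.id1 h₂ h₁) h

theorem at2_urfather2_mem {i a : ℕ} {ψ : F} (h : Form.at1 i (Form.at2 a ψ) ∈ Θ) :
    Form.at1 i (Form.at2 (urfather2 Θ a) ψ) ∈ Θ :=
  urfather_mem (s := {a | Form.at1 i (Form.at2 a ψ) ∈ Θ}) (fun h₁ h₂ => hΘ.id2 h₂ h₁) h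

theorem at12_urfather_mem {i a : ℕ} {ψ : F} (h : Form.at1 i (Form.at2 a ψ) ∈ Θ) :
    Form.at1 (urfather1 Θ i) (Form.at2 (urfather2 Θ a) ψ) ∈ Θ :=
  hΘ.at2_urfather2_mem (hΘ.at1_urfather1_mem h)

theorem truthLemma_dia1 {ψ : F} (ih : TruthLemma Θ ψ) :
    TruthLemma Θ (.dia1 ψ) := fun i a => by
  constructor
  · intro h
    obtain ⟨j, hij, hj⟩ := hΘ.dia1 (hΘ.at1_urfather1_mem h)
    exact ⟨(urfather1 Θ j, urfather2 Θ a), ⟨⟨j, rfl, hij⟩, rfl⟩, (ih j a).1 hj⟩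
  · rintro h ⟨⟨_, _⟩, ⟨⟨j, rfl, hij⟩, rfl⟩, hs⟩
    exact (ih j a).2 (hΘ.negDia1 (hΘ.at1_urfather1_mem h) hij) hs

theorem truthLemma_dia2 {ψ : F} (ih : TruthLemma Θ ψ) :
    TruthLemma Θ (.dia2 ψ) := fun i a => by
  constructor
  · intro h
    obtain ⟨b, hab, hb⟩ := hΘ.dia2 (hΘ.at2_urfather2_mem h)
    exact ⟨(urfather1 Θ i, urfather2 Θ b), ⟨rfl, ⟨b, rfl, hab⟩⟩, (ih i b).1 hb⟩
  · rintro h ⟨⟨_, _⟩, ⟨rfl, ⟨b, rfl, hab⟩⟩, hs⟩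
    exact (ih i b).2 (hΘ.negDia2 (hΘ.at2_urfather2_mem h) hab) hs

theorem truthLemma : ∀ φ : F, TruthLemma Θ φ
  | .prop _ => fun _ _ =>
    ⟨hΘ.at12_urfather_mem, fun h hs => hΘ.open12 hs (hΘ.at12_urfather_mem h)⟩
  | .nom1 _ => fun _ _ =>
    ⟨fun h => hΘ.urfather1_eq (hΘ.red1a h), fun h => hΘ.urfather1_ne (hΘ.red1b h)⟩
  | .nom2 _ => fun _ _ =>
    ⟨fun h => hΘ.urfather2_eq (hΘ.red2a h), fun h => hΘ.urfather2_ne (hΘ.red2b h)⟩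
  | .neg ψ => fun i a =>
    ⟨(truthLemma ψ i a).2, fun h hs => hs ((truthLemma ψ i a).1 (hΘ.negneg h))⟩
  | .and ψ χ => fun i a =>
    ⟨fun h => ⟨(truthLemma ψ i a).1 (hΘ.and h).1, (truthLemma χ i a).1 (hΘ.and h).2⟩,
      fun h ⟨hψ, hχ⟩ =>
        (hΘ.negAnd h).elim ((truthLemma ψ i a).2 · hψ) ((truthLemma χ i a).2 · hχ)⟩
  | .dia1 ψ => hΘ.truthLemma_dia1 (truthLemma ψ)
  | .dia2 ψ => hΘ.truthLemma_dia2 (truthLemma ψ)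
  | .at1 j ψ => fun _ a =>
    ⟨fun h => (truthLemma ψ j a).1 (hΘ.at1 h), fun h => (truthLemma ψ j a).2 (hΘ.negAt1 h)⟩
  | .at2 b ψ => fun i _ =>
    ⟨fun h => (truthLemma ψ i b).1 (hΘ.at2 h), fun h => (truthLemma ψ i b).2 (hΘ.negAt2 h)⟩

end IsHintikka

end Model

/-- completeness of the HPL tableau calculus: if `φ` is valid
on all product Kripke frames, then there is a closed tableau with root
formula `@ᵢ@ₐ¬φ` for fresh nominals `i`, `a` (not occurring in `φ`). -/
theorem tableau_completeness (φ : F)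
    (hvalid : ∀ (W1 W2 : Type) (M : ProductModel ℕ ℕ ℕ W1 W2) (w : W1 × W2),
      M.sat w φ) :
    ∃ i a : ℕ, ¬ occ1 i φ ∧ ¬ occ2 a φ ∧
      ClosedTab [Form.at1 i (Form.at2 a (Form.neg φ))] := by
  refine ⟨nomBound φ, nomBound φ, fun h => (lt_nomBound_of_occ1 h).false,
    fun h => (lt_nomBound_of_occ2 h).false, ?_⟩
  by_contra hopen
  have hΘ := isHintikka_saturation hopen
  exact (hΘ.truthLemma φ _ _).2 (subset_saturation (List.mem_singleton_self _))
    (hvalid ℕ ℕ _ _)
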